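/- In an MV-algebra, a prime implication filter P contains all counits if and only if for every x ∉ P and every p ∈ P, we have x ≤ p. -/

import Mathlib

/-- An MV-algebra `(α, ⊕, ¬, 0)` with the standard axioms. -/
class MV (α : Type*) extends Add α, Neg α, Zero α where
  add_assoc : ∀ a b c : α, a + (b + c) = (a + b) + c
  add_comm : ∀ a b : α, a + b = b + a
  add_zero : ∀ a : α, a + 0 = a
  neg_neg : ∀ a : α, - -a = a
  add_neg_zero : ∀ a : α, a + -(0 : α) = -(0 : α)
  luk : ∀ a b : α, -(-a + b) + b = -(-b + a) + a

namespace MV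

variable {α : Type*} [MV α]

/-- The top element `1 = ¬0`. -/
def one (α : Type*) [MV α] : α := -(0 : α)

/-- Implication `x → y = ¬x ⊕ y`. -/
def imp (a b : α) : α := -a + b

/-- Strong conjunction `x ⊗ y = ¬(¬x ⊕ ¬y)`. -/
def otimes (a b : α) : α := -(-a + -b)

/-- Join `x ∨ y = (x → y) → y`. -/
def sup (a b : α) : α := imp (imp a b) b

/-- Meet `x ∧ y = ¬(¬x ∨ ¬y)`. -/
def inf (a b : α) : α := -(sup (-a) (-b))

/-- Order: `x ≤ y` iff `x → y = 1`. -/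
def le (a b : α) : Prop := imp a b = one α

/-- Strict order. -/
def lt (a b : α) : Prop := le a b ∧ a ≠ b

/-- `n`-fold `⊗`-power. -/
def pow (a : α) : ℕ → α
  | 0 => one α
  | n + 1 => otimes a (pow a n)

/-- An implication filter: a lattice filter closed under `⊗`. -/
def IsImpFilter (F : Set α) : Prop :=
  one α ∈ F ∧ (∀ x ∈ F, ∀ y : α, le x y → y ∈ F) ∧
    (∀ x ∈ F, ∀ y ∈ F, inf x y ∈ F) ∧ (∀ x ∈ F, ∀ y ∈ F, otimes x y ∈ F)

/-- A prime implication filter: proper and `x ∨ y ∈ F → x ∈ F ∨ y ∈ F`. -/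
def IsPrime (F : Set α) : Prop :=
  IsImpFilter F ∧ F ≠ Set.univ ∧ ∀ x y : α, sup x y ∈ F → x ∈ F ∨ y ∈ F

/-- A minimal prime implication filter. -/
def IsMinimalPrime (F : Set α) : Prop :=
  IsPrime F ∧ ∀ G : Set α, IsPrime G → G ⊆ F → G = F

/-- A maximal proper implication filter. -/
def IsMaximal (F : Set α) : Prop :=
  IsImpFilter F ∧ F ≠ Set.univ ∧
    ∀ G : Set α, IsImpFilter G → G ≠ Set.univ → F ⊆ G → G = F

/-- A counit: `u < 1` joining to `1` with some `v < 1`. -/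
def IsCounit (u : α) : Prop :=
  lt u (one α) ∧ ∃ v : α, lt v (one α) ∧ sup u v = one α

/-- The implication filter generated by a set. -/
def gen (S : Set α) : Set α := ⋂₀ {F : Set α | IsImpFilter F ∧ S ⊆ F}

/-- The Conrad filter: the implication filter generated by all counits. -/
def conrad (α : Type*) [MV α] : Set α := gen {u : α | IsCounit u}

/-- The localizing filter `ℓ(P)`, generated by `{x → p : p ∈ P, x ∉ P}`. -/
def locFilter (P : Set α) : Set α :=
  gen {z : α | ∃ x : α, x ∉ P ∧ ∃ p ∈ P, z = imp x p}

end MV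

/-! By prelinearity `(x → y) ∨ (y → x) = 1`, the element `x → y` is a counit as soon as `x` and
`y` are incomparable. If `x ∉ P`, `p ∈ P` and `x ≰ p`, then also `p ≰ x` since `P` is upward
closed, so the counit `p → x` lies in `P` and modus ponens puts `x` into `P`. Conversely, for a
counit `u` with `u ∨ v = 1`, primeness puts `u` or `v` into `P`; if only `v` were in `P` we would
get `u ≤ v` and hence `v = u ∨ v = 1`. -/

namespace MV

variable {α : Type*} [MV α]

protected lemma add_one (a : α) : a + one α = one α := MV.add_neg_zero a

protected lemma one_add (a : α) : one α + a = one α := by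
  rw [MV.add_comm, MV.add_one]

protected lemma zero_add (a : α) : (0 : α) + a = a := by
  rw [MV.add_comm, MV.add_zero]

protected lemma neg_one : -(one α) = (0 : α) := MV.neg_neg 0

protected lemma neg_add_self (a : α) : -a + a = one α := by
  have h := MV.luk a (one α)
  rwa [MV.add_one, MV.neg_one, MV.zero_add, eq_comm] at h

lemma le_one (a : α) : le a (one α) := MV.add_one (-a)

lemma sup_comm (a b : α) : sup a b = sup b a := MV.luk a b

lemma sup_eq_right_of_le {a b : α} (h : le a b) : sup a b = b := by
  change -(imp a b) + b = b
  rw [show imp a b = one α from h, MV.neg_one, MV.zero_add]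

lemma le_sup_right (a b : α) : le b (sup a b) := by
  change -b + (-(-a + b) + b) = one α
  rw [MV.add_comm (-(-a + b)) b, MV.add_assoc, MV.neg_add_self, MV.one_add]

lemma le_imp_self (a b : α) : le b (imp a b) := by
  change -b + (-a + b) = one α
  rw [MV.add_assoc, MV.add_comm (-b) (-a), ← MV.add_assoc, MV.neg_add_self, MV.add_one]

lemma neg_le_neg {a b : α} (h : le a b) : le (-b) (-a) := by
  change -(-b) + -a = one α
  rw [MV.neg_neg, MV.add_comm]
  exact h

-- The left side is `sup b a` with its summands swapped.
lemma add_neg_neg_add_of_le {a b : α} (h : le a b) : a + -(-b + a) = b := by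
  rw [MV.add_comm]
  exact (sup_comm b a).trans (sup_eq_right_of_le h)

lemma add_neg_sup (a b : α) : b + -(sup a b) = imp a b :=
  add_neg_neg_add_of_le (le_imp_self a b)

lemma neg_sup_add_neg_imp (a b : α) : -(sup a b) + -(imp a b) = -b := by
  have h := add_neg_neg_add_of_le (neg_le_neg (le_sup_right a b))
  rwa [MV.neg_neg, add_neg_sup] at h

-- Prelinearity: the point is that `(a → b) → (b → a) = b → a`.
lemma sup_imp_imp (a b : α) : sup (imp a b) (imp b a) = one α := by
  have hba : imp b a = a + -(sup a b) := by rw [sup_comm, add_neg_sup]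
  have himp : -(imp a b) + imp b a = imp b a := by
    conv_lhs => rw [hba]
    rw [MV.add_comm a, MV.add_assoc, MV.add_comm (-(imp a b)), neg_sup_add_neg_imp]
    rfl
  change -(-(imp a b) + imp b a) + imp b a = one α
  rw [himp, MV.neg_add_self]

lemma otimes_imp (a b : α) : otimes a (imp a b) = inf b a := by
  unfold otimes imp inf sup imp
  rw [MV.neg_neg b, MV.add_comm (-a) b, MV.add_comm (-a) (-(b + -a))]

lemma inf_le_left (a b : α) : le (inf a b) a := by
  change -(-(-(-(-a) + -b) + -b)) + a = one α
  rw [MV.neg_neg, MV.neg_neg a, ← MV.add_assoc, MV.add_comm (-b) a, MV.neg_add_self]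

lemma isCounit_imp {a b : α} (hab : ¬le a b) (hba : ¬le b a) : IsCounit (imp a b) :=
  ⟨⟨le_one _, hab⟩, imp b a, ⟨le_one _, hba⟩, sup_imp_imp a b⟩

namespace IsImpFilter

variable {F : Set α}

lemma one_mem (hF : IsImpFilter F) : one α ∈ F := hF.1

lemma mem_of_le (hF : IsImpFilter F) {a b : α} (ha : a ∈ F) (hab : le a b) : b ∈ F :=
  hF.2.1 a ha b hab

lemma mem_of_mem_imp (hF : IsImpFilter F) {a b : α} (ha : a ∈ F) (hab : imp a b ∈ F) : b ∈ F := by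
  have hinf : inf b a ∈ F := otimes_imp a b ▸ hF.2.2.2 a ha _ hab
  exact hF.mem_of_le hinf (inf_le_left b a)

end IsImpFilter

end MV

open MV
/-- A prime implication filter `P` contains all counits iff
every `x ∉ P` is below every `p ∈ P`. -/
theorem prime_contains_counits_iff {α : Type*} [MV α] (P : Set α) (hP : IsPrime P) :
    (∀ u : α, IsCounit u → u ∈ P) ↔ ∀ x ∉ P, ∀ p ∈ P, le x p := by
  obtain ⟨hF, -, hprime⟩ := hP
  constructor
  · intro hcounits x hx p hp
    by_contra hxp
    have hpx : ¬le p x := fun h => hx (hF.mem_of_le hp h)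
    exact hx (hF.mem_of_mem_imp hp (hcounits _ (isCounit_imp hpx hxp)))
  · rintro hbelow u ⟨-, v, ⟨-, hv⟩, huv⟩
    rcases hprime u v (huv ▸ hF.one_mem) with hu | hvP
    · exact hu
    · by_contra hu
      exact hv (by rw [← sup_eq_right_of_le (hbelow u hu v hvP), huv])
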